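/- arXiv:1611.01314 — 3 statements merged into one kernel-verified Lean document; each statement's English description precedes it below -/
import Mathlib

section
/- For the ODE system ∂ₜu₀ = 0, ∂ₜu₁ = −2u₁, ∂ₜu₂ = −6u₂ + 2u₀, if the initial data satisfies the second-order realizability conditions u₀ ≥ |u₁| and u₀u₂ ≥ u₁², then the exact solution satisfies these conditions for all t ≥ 0, and as t → ∞ the solution converges to the isotropic state (u₀(0), 0, u₀(0)/3). -/
/-!
Both `u₁` and `u₂ - u₀(0)/3` solve scalar equations `f' = c f` with `c < 0`, so they are
`e^{ct}` times their initial value; this gives the convergence. Writing `s = e^{-2t} ∈ (0, 1]`,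
the solution is `u₁ = s u₁(0)` and `u₂ = s³ (u₂(0) - u₀(0)/3) + u₀(0)/3`, and realizability at
time `t` becomes a polynomial inequality in `s` that follows from realizability at time `0`.
-/

open Filter Real Topology

theorem eq_exp_mul_smul_of_hasDerivAt {E : Type*} [NormedAddCommGroup E] [NormedSpace ℝ E]
    {f : ℝ → E} {c : ℝ} (hf : ∀ t, HasDerivAt f (c • f t) t) (t : ℝ) :
    f t = exp (c * t) • f 0 := by
  have hconst : ∀ s, HasDerivAt (fun s => exp (-(c * s)) • f s) 0 s := by
    intro s
    have he : HasDerivAt (fun s => exp (-(c * s))) (exp (-(c * s)) * -c) s := by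
      simpa using ((hasDerivAt_id s).const_mul c).neg.exp
    refine (he.smul (hf s)).congr_deriv ?_
    rw [smul_smul, ← add_smul]
    simp
  have := is_const_of_deriv_eq_zero (fun s => (hconst s).differentiableAt)
    (fun s => (hconst s).deriv) t 0
  simp only [mul_zero, neg_zero, exp_zero, one_smul] at this
  rw [← this, smul_smul, ← exp_add]
  simp

theorem tendsto_exp_mul_atTop_nhds_zero {c : ℝ} (hc : c < 0) :
    Tendsto (fun t => exp (c * t)) atTop (𝓝 0) :=
  tendsto_exp_atBot.comp (tendsto_id.const_mul_atTop_of_neg hc)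

theorem tendsto_atTop_nhds_zero_of_hasDerivAt_smul {E : Type*} [NormedAddCommGroup E]
    [NormedSpace ℝ E] {f : ℝ → E} {c : ℝ} (hc : c < 0)
    (hf : ∀ t, HasDerivAt f (c • f t) t) :
    Tendsto f atTop (𝓝 0) := by
  have := (tendsto_exp_mul_atTop_nhds_zero hc).smul_const (f 0)
  rw [zero_smul] at this
  exact this.congr fun t => (eq_exp_mul_smul_of_hasDerivAt hf t).symm

/-- Second-order realizability of the moments `(m, a, b) = (u₀, u₁, u₂)`. -/
def MomentRealizable (m a b : ℝ) : Prop := |a| ≤ m ∧ a ^ 2 ≤ m * b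

theorem MomentRealizable.decay {m a b s : ℝ} (h : MomentRealizable m a b) (hs₀ : 0 ≤ s)
    (hs₁ : s ≤ 1) :
    MomentRealizable m (s * a) (s ^ 3 * (b - m / 3) + m / 3) := by
  obtain ⟨hma, hab⟩ := h
  have hsq : a ^ 2 ≤ m ^ 2 := sq_le_sq' (abs_le.1 hma).1 (abs_le.1 hma).2
  refine ⟨?_, ?_⟩
  · rw [abs_mul, abs_of_nonneg hs₀]
    nlinarith [abs_nonneg a]
  · -- given `s³ a² ≤ s³ m b` and `a² ≤ m²`, this is `s² (1 - s) ≤ (1 - s³) / 3`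
    have hpoly : 0 ≤ (1 - s) ^ 2 * (1 + 2 * s) := by positivity
    nlinarith [mul_le_mul_of_nonneg_left hab (pow_nonneg hs₀ 3),
      mul_le_mul_of_nonneg_left hsq (mul_nonneg (sq_nonneg s) (sub_nonneg.2 hs₁))]

/-- for the ODE system `u₀' = 0`, `u₁' = -2u₁`, `u₂' = -6u₂ + 2u₀`, if
the initial data satisfies the second-order realizability conditions `u₀ ≥ |u₁|` and
`u₀u₂ ≥ u₁²`, then the solution satisfies these for all `t ≥ 0` and converges as
`t → ∞` to the isotropic state `(u₀(0), 0, u₀(0)/3)`. -/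
theorem laplace_beltrami_moment_ode_realizability
    (u₀ u₁ u₂ : ℝ → ℝ)
    (h₀ : ∀ t, HasDerivAt u₀ 0 t)
    (h₁ : ∀ t, HasDerivAt u₁ (-2 * u₁ t) t)
    (h₂ : ∀ t, HasDerivAt u₂ (-6 * u₂ t + 2 * u₀ t) t)
    (hinit₁ : |u₁ 0| ≤ u₀ 0)
    (hinit₂ : u₁ 0 ^ 2 ≤ u₀ 0 * u₂ 0) :
    (∀ t : ℝ, 0 ≤ t → |u₁ t| ≤ u₀ t ∧ u₁ t ^ 2 ≤ u₀ t * u₂ t) ∧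
    Tendsto (fun t => (u₀ t, u₁ t, u₂ t)) atTop (nhds (u₀ 0, 0, u₀ 0 / 3)) := by
  have hu₀ : ∀ t, u₀ t = u₀ 0 := fun t =>
    is_const_of_deriv_eq_zero (fun s => (h₀ s).differentiableAt) (fun s => (h₀ s).deriv) t 0
  have h₂' : ∀ t, HasDerivAt (fun t => u₂ t - u₀ 0 / 3) (-6 * (u₂ t - u₀ 0 / 3)) t :=
    fun t => ((h₂ t).sub_const _).congr_deriv (by rw [hu₀]; ring)
  have hu₁ : ∀ t, u₁ t = exp (-2 * t) * u₁ 0 := eq_exp_mul_smul_of_hasDerivAt h₁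
  have hu₂ : ∀ t, u₂ t = exp (-2 * t) ^ 3 * (u₂ 0 - u₀ 0 / 3) + u₀ 0 / 3 := fun t => by
    have h := eq_exp_mul_smul_of_hasDerivAt h₂' t
    have hexp : exp (-6 * t) = exp (-2 * t) ^ 3 := by rw [← exp_nat_mul]; ring_nf
    simp only [smul_eq_mul, hexp] at h
    linarith
  refine ⟨fun t ht => ?_, ?_⟩
  · rw [hu₀, hu₁, hu₂]
    exact MomentRealizable.decay ⟨hinit₁, hinit₂⟩ (exp_nonneg _)
      (exp_le_one_iff.2 (by linarith))
  · have hu₁_lim := tendsto_atTop_nhds_zero_of_hasDerivAt_smul (c := -2) (by norm_num) h₁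
    have hu₂_lim := tendsto_sub_nhds_zero_iff.1 <|
      tendsto_atTop_nhds_zero_of_hasDerivAt_smul (c := -6) (by norm_num) h₂'
    exact (tendsto_const_nhds.congr fun t => (hu₀ t).symm).prodMk_nhds
      (hu₁_lim.prodMk_nhds hu₂_lim)
end

section
/- Let Δ_LB denote the Laplace–Beltrami operator (Δ_LB ψ)(μ) = d/dμ((1−μ²) dψ/dμ) on [-1,1]. For every ψ in the weighted Sobolev space V = {v ∈ L²(-1,1) : √(1−μ²) v' ∈ L²(-1,1)} and Δt > 0, if g ∈ L²(-1,1) with g ≥ 0 a.e. and ψ is the weak solution of (I − (Δt/2)Δ_LB)ψ = g, then ψ ≥ 0 a.e. on (-1,1). -/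
/-!
Test the weak formulation with a smoothed negative part of `ψ`: `min ψ 0` itself is not
differentiable where `ψ` changes sign, so take `v = φ_ε ∘ ψ` with `φ_ε x = (x - √(x² + ε²)) / 2`.
Then `v ≤ 0`, so `∫ v g ≤ 0`; `φ_ε' ∈ [0, 1]`, so `v ∈ V` and the gradient term
`Δt (1 - μ²) φ_ε'(ψ) ψ'²` is nonnegative; and `x φ_ε x ≥ (min x 0)² - ε² / 4`.
Hence `∫ (min ψ 0)² ≤ ε² / 2` for every `ε > 0`, so `min ψ 0 = 0` almost everywhere.
-/

open MeasureTheory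

/-- Membership in the weighted Sobolev space
`V = {v ∈ L²(-1,1) : √(1-μ²) v' ∈ L²(-1,1)}`. -/
def MemV (v : ℝ → ℝ) : Prop :=
  IntegrableOn (fun μ => v μ ^ 2) (Set.Ioo (-1 : ℝ) 1) ∧
  IntegrableOn (fun μ => (1 - μ ^ 2) * (deriv v μ) ^ 2) (Set.Ioo (-1 : ℝ) 1) ∧
  DifferentiableOn ℝ v (Set.Ioo (-1 : ℝ) 1)

open Set

noncomputable def smoothNegPart (ε x : ℝ) : ℝ := (x - √(x ^ 2 + ε ^ 2)) / 2

section smoothNegPart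

variable {ε : ℝ} (x : ℝ)

lemma abs_le_sqrt_sq_add_sq : |x| ≤ √(x ^ 2 + ε ^ 2) :=
  Real.abs_le_sqrt (le_add_of_nonneg_right (sq_nonneg ε))

lemma smoothNegPart_nonpos : smoothNegPart ε x ≤ 0 := by
  have := abs_le_sqrt_sq_add_sq (ε := ε) x
  unfold smoothNegPart
  linarith [le_abs_self x]

lemma smoothNegPart_sq_le : smoothNegPart ε x ^ 2 ≤ x ^ 2 + ε ^ 2 := by
  have hs := Real.sq_sqrt (add_nonneg (sq_nonneg x) (sq_nonneg ε))
  unfold smoothNegPart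
  nlinarith [sq_nonneg (x + √(x ^ 2 + ε ^ 2))]

lemma sq_min_zero_sub_le_mul_smoothNegPart :
    min x 0 ^ 2 - ε ^ 2 / 4 ≤ x * smoothNegPart ε x := by
  have hs := Real.sq_sqrt (add_nonneg (sq_nonneg x) (sq_nonneg ε))
  have hx := abs_le_sqrt_sq_add_sq (ε := ε) x
  unfold smoothNegPart
  rcases le_total x 0 with h | h
  · rw [min_eq_left h]
    nlinarith [neg_abs_le x]
  · rw [min_eq_right h]
    nlinarith [le_abs_self x, sq_nonneg (√(x ^ 2 + ε ^ 2) - x)]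

variable {x}

lemma hasDerivAt_smoothNegPart (hε : ε ≠ 0) :
    HasDerivAt (smoothNegPart ε) ((1 - x / √(x ^ 2 + ε ^ 2)) / 2) x := by
  have hpos : 0 < x ^ 2 + ε ^ 2 := by positivity
  have hsqrt : HasDerivAt (fun y => √(y ^ 2 + ε ^ 2)) (2 * x / (2 * √(x ^ 2 + ε ^ 2))) x := by
    simpa using (((hasDerivAt_id' x).pow 2).add_const (ε ^ 2)).sqrt hpos.ne'
  rw [← mul_div_mul_left x _ two_ne_zero]
  exact ((hasDerivAt_id' x).sub hsqrt).div_const 2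

lemma deriv_smoothNegPart_mem_Icc (hε : ε ≠ 0) : deriv (smoothNegPart ε) x ∈ Icc 0 1 := by
  have hpos : 0 < √(x ^ 2 + ε ^ 2) := Real.sqrt_pos.2 (by positivity)
  have hx := abs_le.1 (abs_le_sqrt_sq_add_sq (ε := ε) x)
  have hle : x / √(x ^ 2 + ε ^ 2) ≤ 1 := (div_le_one hpos).2 hx.2
  have hge : -1 ≤ x / √(x ^ 2 + ε ^ 2) := (le_div_iff₀ hpos).2 (by linarith)
  rw [(hasDerivAt_smoothNegPart hε).deriv]
  constructor <;> linarith

lemma abs_deriv_smoothNegPart_le_one (hε : ε ≠ 0) : |deriv (smoothNegPart ε) x| ≤ 1 :=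
  abs_le.2 ⟨by linarith [(deriv_smoothNegPart_mem_Icc (x := x) hε).1],
    (deriv_smoothNegPart_mem_Icc hε).2⟩

end smoothNegPart

lemma differentiable_smoothNegPart {ε : ℝ} (hε : ε ≠ 0) : Differentiable ℝ (smoothNegPart ε) :=
  fun _ => (hasDerivAt_smoothNegPart hε).differentiableAt

lemma one_sub_sq_nonneg_of_mem_Ioo {μ : ℝ} (hμ : μ ∈ Ioo (-1 : ℝ) 1) : 0 ≤ 1 - μ ^ 2 := by
  nlinarith [hμ.1, hμ.2]

lemma integrable_mul_mul_of_integrable_mul_sq {α : Type*} [MeasurableSpace α] {m : Measure α}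
    {w f g : α → ℝ} (hw : ∀ᵐ x ∂m, 0 ≤ w x)
    (hm : AEStronglyMeasurable (fun x => w x * f x * g x) m)
    (hf : Integrable (fun x => w x * f x ^ 2) m) (hg : Integrable (fun x => w x * g x ^ 2) m) :
    Integrable (fun x => w x * f x * g x) m := by
  refine (hf.add hg).mono' hm ?_
  filter_upwards [hw] with x hx
  show _ ≤ w x * f x ^ 2 + w x * g x ^ 2
  rw [Real.norm_eq_abs, abs_mul, abs_mul, abs_of_nonneg hx, ← sq_abs (f x), ← sq_abs (g x)]
  nlinarith [mul_nonneg hx (sq_nonneg (|f x| - |g x|)),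
    mul_nonneg hx (mul_nonneg (abs_nonneg (f x)) (abs_nonneg (g x)))]

namespace MemV

variable {u v ψ φ : ℝ → ℝ} {L a b : ℝ}

lemma continuousOn (hv : MemV v) : ContinuousOn v (Ioo (-1) 1) :=
  hv.2.2.continuousOn

lemma hasDerivAt (hv : MemV v) {μ : ℝ} (hμ : μ ∈ Ioo (-1 : ℝ) 1) :
    HasDerivAt v (deriv v μ) μ :=
  ((hv.2.2 μ hμ).differentiableAt (isOpen_Ioo.mem_nhds hμ)).hasDerivAt

lemma memLp_two (hv : MemV v) : MemLp v 2 (volume.restrict (Ioo (-1) 1)) :=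
  (memLp_two_iff_integrable_sq (hv.continuousOn.aestronglyMeasurable measurableSet_Ioo)).2 hv.1

lemma integrableOn_mul (hu : MemV u) (hv : MemV v) :
    IntegrableOn (fun μ => u μ * v μ) (Ioo (-1) 1) :=
  hu.memLp_two.integrable_mul hv.memLp_two

lemma integrableOn_weight_mul_deriv_mul_deriv (hu : MemV u) (hv : MemV v) :
    IntegrableOn (fun μ => (1 - μ ^ 2) * deriv u μ * deriv v μ) (Ioo (-1) 1) :=
  integrable_mul_mul_of_integrable_mul_sq
    ((ae_restrict_iff' measurableSet_Ioo).2 (ae_of_all _ fun _ => one_sub_sq_nonneg_of_mem_Ioo))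
    (by fun_prop) hu.2.1 hv.2.1

lemma integrableOn_sq_min_zero (hv : MemV v) :
    IntegrableOn (fun μ => min (v μ) 0 ^ 2) (Ioo (-1) 1) := by
  have hmin : ContinuousOn (fun μ => min (v μ) 0) (Ioo (-1) 1) :=
    (continuous_id.min continuous_const).comp_continuousOn hv.continuousOn
  refine hv.1.mono' ((hmin.pow 2).aestronglyMeasurable measurableSet_Ioo)
    (ae_of_all _ fun μ => ?_)
  rw [Real.norm_eq_abs, abs_of_nonneg (sq_nonneg _), ← sq_abs, ← sq_abs (v μ)]
  exact pow_le_pow_left₀ (abs_nonneg _) (by rcases le_total (v μ) 0 with h | h <;> simp [h]) 2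

lemma comp (hψ : MemV ψ) (hφ : Differentiable ℝ φ) (hφ' : ∀ x, |deriv φ x| ≤ L)
    (hφsq : ∀ x, φ x ^ 2 ≤ a * x ^ 2 + b) : MemV (φ ∘ ψ) := by
  refine ⟨?_, ?_, hφ.comp_differentiableOn hψ.2.2⟩
  · refine ((hψ.1.const_mul a).add (integrableOn_const (C := b) measure_Ioo_lt_top.ne)).mono'
      (((hφ.continuous.comp_continuousOn hψ.continuousOn).pow 2).aestronglyMeasurable
        measurableSet_Ioo) (ae_of_all _ fun μ => ?_)
    simpa [abs_of_nonneg (sq_nonneg (φ (ψ μ)))] using hφsq (ψ μ)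
  · refine (hψ.2.1.const_mul (L ^ 2)).mono' (by fun_prop)
      ((ae_restrict_iff' measurableSet_Ioo).2 (ae_of_all _ fun μ hμ => ?_))
    have hw := mul_nonneg (one_sub_sq_nonneg_of_mem_Ioo hμ) (sq_nonneg (deriv ψ μ))
    have hL : deriv φ (ψ μ) ^ 2 ≤ L ^ 2 :=
      sq_abs (deriv φ (ψ μ)) ▸ pow_le_pow_left₀ (abs_nonneg _) (hφ' _) 2
    rw [((hφ _).hasDerivAt.comp μ (hψ.hasDerivAt hμ)).deriv, Real.norm_eq_abs,
      abs_of_nonneg (mul_nonneg (one_sub_sq_nonneg_of_mem_Ioo hμ) (sq_nonneg _))]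
    calc (1 - μ ^ 2) * (deriv φ (ψ μ) * deriv ψ μ) ^ 2
        = deriv φ (ψ μ) ^ 2 * ((1 - μ ^ 2) * deriv ψ μ ^ 2) := by ring
      _ ≤ L ^ 2 * ((1 - μ ^ 2) * deriv ψ μ ^ 2) := mul_le_mul_of_nonneg_right hL hw

end MemV

def IsWeakSolution (Δt : ℝ) (g ψ : ℝ → ℝ) : Prop :=
  ∀ v : ℝ → ℝ, MemV v →
    ∫ μ in Ioo (-1 : ℝ) 1, (v μ * ψ μ + Δt * (1 - μ ^ 2) * deriv v μ * deriv ψ μ)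
      = ∫ μ in Ioo (-1 : ℝ) 1, v μ * g μ

lemma IsWeakSolution.integral_sq_min_zero_le {Δt : ℝ} (hΔt : 0 ≤ Δt) {g ψ : ℝ → ℝ}
    (hg : ∀ᵐ μ ∂(volume.restrict (Ioo (-1 : ℝ) 1)), 0 ≤ g μ) (hψ : MemV ψ)
    (h : IsWeakSolution Δt g ψ) {ε : ℝ} (hε : 0 < ε) :
    ∫ μ in Ioo (-1 : ℝ) 1, min (ψ μ) 0 ^ 2 ≤ ε ^ 2 / 2 := by
  set v := smoothNegPart ε ∘ ψ
  have hv : MemV v := hψ.comp (a := 1) (b := ε ^ 2) (differentiable_smoothNegPart hε.ne')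
    (fun _ => abs_deriv_smoothNegPart_le_one hε.ne')
    (fun x => by simpa only [one_mul] using smoothNegPart_sq_le x)
  have hpoint : ∀ μ ∈ Ioo (-1 : ℝ) 1, min (ψ μ) 0 ^ 2 - ε ^ 2 / 4 ≤
      v μ * ψ μ + Δt * (1 - μ ^ 2) * deriv v μ * deriv ψ μ := by
    intro μ hμ
    have hdv : deriv v μ = deriv (smoothNegPart ε) (ψ μ) * deriv ψ μ :=
      ((differentiable_smoothNegPart hε.ne' _).hasDerivAt.comp μ (hψ.hasDerivAt hμ)).deriv
    have hform : 0 ≤ Δt * (1 - μ ^ 2) * deriv v μ * deriv ψ μ := by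
      have := (deriv_smoothNegPart_mem_Icc (x := ψ μ) hε.ne').1
      have := one_sub_sq_nonneg_of_mem_Ioo hμ
      calc 0 ≤ Δt * (1 - μ ^ 2) * deriv (smoothNegPart ε) (ψ μ) * deriv ψ μ ^ 2 := by positivity
        _ = _ := by rw [hdv]; ring
    have := sq_min_zero_sub_le_mul_smoothNegPart (ε := ε) (ψ μ)
    simp only [v, Function.comp_apply]
    linarith [mul_comm (ψ μ) (smoothNegPart ε (ψ μ))]
  have hmin_int : IntegrableOn (fun μ => min (ψ μ) 0 ^ 2 - ε ^ 2 / 4) (Ioo (-1) 1) :=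
    hψ.integrableOn_sq_min_zero.sub (integrableOn_const measure_Ioo_lt_top.ne)
  have hform_int : IntegrableOn
      (fun μ => v μ * ψ μ + Δt * (1 - μ ^ 2) * deriv v μ * deriv ψ μ) (Ioo (-1) 1) :=
    (hv.integrableOn_mul hψ).add (((hv.integrableOn_weight_mul_deriv_mul_deriv hψ).const_mul
      Δt).congr (ae_of_all _ fun μ => by ring))
  have hrhs : ∫ μ in Ioo (-1 : ℝ) 1, v μ * g μ ≤ 0 := by
    refine integral_nonpos_of_ae ?_
    filter_upwards [hg] with μ hgμ
    exact mul_nonpos_of_nonpos_of_nonneg (smoothNegPart_nonpos _) hgμ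
  calc ∫ μ in Ioo (-1 : ℝ) 1, min (ψ μ) 0 ^ 2
      = (∫ μ in Ioo (-1 : ℝ) 1, (min (ψ μ) 0 ^ 2 - ε ^ 2 / 4)) + ε ^ 2 / 2 := by
        rw [integral_sub hψ.integrableOn_sq_min_zero (integrableOn_const measure_Ioo_lt_top.ne),
          setIntegral_const, Real.volume_real_Ioo_of_le (by norm_num)]
        ring
    _ ≤ (∫ μ in Ioo (-1 : ℝ) 1, v μ * g μ) + ε ^ 2 / 2 := by
        rw [← h v hv]
        gcongr 1
        exact setIntegral_mono_on hmin_int hform_int measurableSet_Ioo hpoint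
    _ ≤ ε ^ 2 / 2 := by linarith

lemma ae_nonneg_of_integral_sq_min_zero_nonpos {α : Type*} [MeasurableSpace α] {m : Measure α}
    {f : α → ℝ} (hf : Integrable (fun x => min (f x) 0 ^ 2) m)
    (h : ∫ x, min (f x) 0 ^ 2 ∂m ≤ 0) : ∀ᵐ x ∂m, 0 ≤ f x := by
  have hzero := (integral_eq_zero_iff_of_nonneg (fun x => sq_nonneg (min (f x) 0)) hf).1
    (le_antisymm h (integral_nonneg fun x => sq_nonneg _))
  filter_upwards [hzero] with x hx
  simpa using hx

theorem implicit_laplace_beltrami_preserves_nonnegativity_general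
    (Δt : ℝ) (hΔt : 0 < Δt)
    (g ψ : ℝ → ℝ)
    (hg_nonneg : ∀ᵐ μ ∂(volume.restrict (Set.Ioo (-1 : ℝ) 1)), 0 ≤ g μ)
    (hψ : MemV ψ)
    (hweak : ∀ v : ℝ → ℝ, MemV v →
      ∫ μ in Set.Ioo (-1 : ℝ) 1,
          (v μ * ψ μ + Δt * (1 - μ ^ 2) * deriv v μ * deriv ψ μ)
        = ∫ μ in Set.Ioo (-1 : ℝ) 1, v μ * g μ) :
    ∀ᵐ μ ∂(volume.restrict (Set.Ioo (-1 : ℝ) 1)), 0 ≤ ψ μ := by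
  refine ae_nonneg_of_integral_sq_min_zero_nonpos hψ.integrableOn_sq_min_zero
    (le_of_forall_pos_le_add fun δ hδ => ?_)
  have hsmall := IsWeakSolution.integral_sq_min_zero_le hΔt.le hg_nonneg hψ hweak
    (Real.sqrt_pos.2 (by positivity : 0 < 2 * δ))
  rwa [Real.sq_sqrt (by positivity), mul_div_cancel_left₀ _ two_ne_zero, ← zero_add δ] at hsmall

/-- the weak solution `ψ ∈ V` of `(I − (Δt/2)Δ_LB)ψ = g`, i.e.
`(v,ψ)_V = ∫ v g` for all `v ∈ V`, with `g ∈ L²` nonnegative a.e., is itself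
nonnegative a.e. on `(-1,1)`. -/
theorem implicit_laplace_beltrami_preserves_nonnegativity
    (Δt : ℝ) (hΔt : 0 < Δt)
    (g ψ : ℝ → ℝ)
    (hg_mem : IntegrableOn (fun μ => g μ ^ 2) (Set.Ioo (-1 : ℝ) 1))
    (hg_nonneg : ∀ᵐ μ ∂(volume.restrict (Set.Ioo (-1 : ℝ) 1)), 0 ≤ g μ)
    (hψ : MemV ψ)
    (hweak : ∀ v : ℝ → ℝ, MemV v →
      ∫ μ in Set.Ioo (-1 : ℝ) 1,
          (v μ * ψ μ + Δt * (1 - μ ^ 2) * deriv v μ * deriv ψ μ)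
        = ∫ μ in Set.Ioo (-1 : ℝ) 1, v μ * g μ) :
    ∀ᵐ μ ∂(volume.restrict (Set.Ioo (-1 : ℝ) 1)), 0 ≤ ψ μ :=
  implicit_laplace_beltrami_preserves_nonnegativity_general Δt hΔt g ψ hg_nonneg hψ hweak
end

section
/- Let R ⊂ ℝⁿ be a convex cone, w ∈ R, σ_a, σ_s ≥ 0, Δt > 0, and suppose the implicit equation v = (1+Δt σ_a)^{-1}w + (1+Δt σ_a)^{-1}Δt σ_s C_u(v) has a unique solution and that implicit Euler steps of the form v = u + τ C_u(v) with u ∈ R and τ ≥ 0 preserve realizability (v ∈ R). Then the IMEX source update u^{κ+1} solving u^{κ+1} = w + Δt(σ_s C_u(u^{κ+1}) − σ_a u^{κ+1}) satisfies u^{κ+1} ∈ R. -/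
/-- the IMEX source update preserves realizability: if `R` is a
convex cone, `w ∈ R`, `σ_a, σ_s ≥ 0`, `Δt > 0`, the rescaled implicit equation is
uniquely solvable, and implicit Euler steps `v = u + τ • C_u(v)` with `u ∈ R`,
`τ ≥ 0` preserve realizability, then any solution `v` of
`v = w + Δt (σ_s C_u(v) - σ_a v)` lies in `R`. -/
theorem imex_source_update_preserves_realizability
    {n : ℕ} (R : Set (Fin n → ℝ))
    (hR_convex : Convex ℝ R)
    (hR_cone : ∀ (c : ℝ), 0 < c → ∀ u ∈ R, c • u ∈ R)
    (Cu : (Fin n → ℝ) → (Fin n → ℝ))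
    (w : Fin n → ℝ) (hw : w ∈ R)
    (σa σs : ℝ) (hσa : 0 ≤ σa) (hσs : 0 ≤ σs)
    (Δt : ℝ) (hΔt : 0 < Δt)
    (huniq : ∃! v : Fin n → ℝ,
      v = (1 + Δt * σa)⁻¹ • w + ((1 + Δt * σa)⁻¹ * (Δt * σs)) • Cu v)
    (hpres : ∀ u ∈ R, ∀ τ : ℝ, 0 ≤ τ → ∀ v : Fin n → ℝ, v = u + τ • Cu v → v ∈ R)
    (v : Fin n → ℝ) (hv : v = w + Δt • (σs • Cu v - σa • v)) :
    v ∈ R := by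
  have ha : (0:ℝ) < 1 + Δt * σa := by positivity
  have key : v = (1 + Δt * σa)⁻¹ • w + ((1 + Δt * σa)⁻¹ * (Δt * σs)) • Cu v := by
    have h1 : (1 + Δt * σa) • v = w + (Δt * σs) • Cu v := by
      linear_combination (norm := module) hv
    have := congrArg (fun x => (1 + Δt * σa)⁻¹ • x) h1
    simpa [smul_smul, inv_mul_cancel₀ ha.ne', smul_add] using this
  exact hpres _ (hR_cone _ (by positivity) w hw) _
    (by positivity) v key
end
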